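/- Let e^{(1)}, ..., e^{(m)} be e-values for null hypotheses H_0^{(1)}, ..., H_0^{(m)} (i.e., E[e^{(j)}] ≤ 1 under H_0^{(j)}), and let ℰ be a self-consistent e-testing procedure at level α, meaning every rejected index j in S̃ = ℰ(e^{(1)},...,e^{(m)}) satisfies e^{(j)} ≥ m/(α|S̃|). Then the false discovery rate E[|S̃ ∩ S_0| / max(|S̃|, 1)] is at most α, where S_0 is the set of true nulls. -/
import Mathlib


open MeasureTheory

/-- Any self-consistent e-testing procedure at level `α` controls the false discovery rate at
level `α`, for arbitrary configurations of e-values. -/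
theorem stmt13 {Ω : Type*} [MeasurableSpace Ω] (μ : Measure Ω) [IsProbabilityMeasure μ]
    (m : ℕ) (e : Fin m → Ω → ℝ) (S0 : Finset (Fin m)) (Stil : Ω → Finset (Fin m))
    (α : ℝ) (hα : α ∈ Set.Ioo (0 : ℝ) 1)
    (he_meas : ∀ j, Measurable (e j))
    (he_nonneg : ∀ j ω, 0 ≤ e j ω)
    (he_int : ∀ j ∈ S0, Integrable (e j) μ)
    (he_val : ∀ j ∈ S0, ∫ ω, e j ω ∂μ ≤ 1)
    (hS_meas : ∀ s : Finset (Fin m), MeasurableSet {ω | Stil ω = s})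
    (hsc : ∀ ω, ∀ j ∈ Stil ω, (m : ℝ) / (α * (Stil ω).card) ≤ e j ω) :
    ∫ ω, ((Stil ω ∩ S0).card : ℝ) / max ((Stil ω).card : ℝ) 1 ∂μ ≤ α := by
  obtain ⟨hα0, hα1⟩ := hα
  set g : Ω → ℝ := fun ω => ∑ j ∈ S0, (α / m) * e j ω with hg
  have ham : 0 ≤ α / m := div_nonneg hα0.le (Nat.cast_nonneg m)
  have hpt : ∀ ω, ((Stil ω ∩ S0).card : ℝ) / max ((Stil ω).card : ℝ) 1 ≤ g ω := by
    intro ω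
    have hgnn : 0 ≤ g ω :=
      Finset.sum_nonneg fun j _ => mul_nonneg ham (he_nonneg j ω)
    rcases eq_or_ne (Stil ω) ∅ with h | h
    · simp [h, hgnn]
    · have hne : (Stil ω).Nonempty := Finset.nonempty_iff_ne_empty.2 h
      have hcard : 1 ≤ (Stil ω).card := Finset.card_pos.2 hne
      have hm : 0 < m := hne.elim fun j _ => j.pos
      have hc0 : (0:ℝ) < (Stil ω).card := by exact_mod_cast hcard
      have hmax : max ((Stil ω).card : ℝ) 1 = (Stil ω).card :=
        max_eq_left (by exact_mod_cast hcard)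
      rw [hmax]
      have key : ∀ j ∈ Stil ω ∩ S0, (1:ℝ)/(Stil ω).card ≤ (α/m) * e j ω := by
        intro j hj
        have hjS := (Finset.mem_inter.1 hj).1
        have he := hsc ω j hjS
        have h2 := mul_le_mul_of_nonneg_left he ham
        have heq : (α/m) * ((m:ℝ) / (α * (Stil ω).card)) = 1/(Stil ω).card := by
          have hm' : (0:ℝ) < m := by exact_mod_cast hm
          field_simp
        linarith [heq ▸ h2]
      calc ((Stil ω ∩ S0).card : ℝ) / (Stil ω).card
          = ∑ j ∈ Stil ω ∩ S0, (1:ℝ)/(Stil ω).card := by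
            rw [Finset.sum_const, nsmul_eq_mul]; ring
        _ ≤ ∑ j ∈ Stil ω ∩ S0, (α/m) * e j ω := Finset.sum_le_sum key
        _ ≤ g ω := Finset.sum_le_sum_of_subset_of_nonneg Finset.inter_subset_right
            (fun j _ _ => mul_nonneg ham (he_nonneg j ω))
  have hint : Integrable g μ :=
    integrable_finset_sum _ fun j hj => ((he_int j hj).const_mul _)
  have h1 : ∫ ω, ((Stil ω ∩ S0).card : ℝ) / max ((Stil ω).card : ℝ) 1 ∂μ ≤ ∫ ω, g ω ∂μ := by
    refine integral_mono_of_nonneg (ae_of_all _ fun ω => ?_) hint (ae_of_all _ hpt)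
    exact div_nonneg (Nat.cast_nonneg _) (le_max_of_le_right zero_le_one)
  refine h1.trans ?_
  have h2 : ∫ ω, g ω ∂μ = ∑ j ∈ S0, (α / m) * ∫ ω, e j ω ∂μ := by
    rw [hg, integral_finset_sum _ fun j hj => ((he_int j hj).const_mul _)]
    exact Finset.sum_congr rfl fun j hj => MeasureTheory.integral_const_mul _ _
  rw [h2]
  have h3 : ∑ j ∈ S0, (α / m) * ∫ ω, e j ω ∂μ ≤ ∑ j ∈ S0, (α / m) * 1 :=
    Finset.sum_le_sum fun j hj => mul_le_mul_of_nonneg_left (he_val j hj) ham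
  refine h3.trans ?_
  rw [Finset.sum_const, nsmul_eq_mul, mul_one]
  rcases Nat.eq_zero_or_pos m with hm | hm
  · subst hm
    simp [Finset.eq_empty_of_isEmpty S0, hα0.le]
  · have hm' : (0:ℝ) < m := by exact_mod_cast hm
    have hle : (S0.card : ℝ) ≤ m := by
      have := Finset.card_le_univ S0; simp [Fintype.card_fin] at this; exact_mod_cast this
    calc (S0.card : ℝ) * (α / m) ≤ (m:ℝ) * (α / m) :=
          mul_le_mul_of_nonneg_right hle ham
      _ = α := by field_simp
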